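/- arXiv:2106.12928 — 2 statements merged into one kernel-verified Lean document; each statement's English description precedes it below -/
import Mathlib

section
/- Let $A$ be a finite nonempty set, $T > 0$, $r : A \to \mathbb{R}$, and let $p : A \to (0,1)$ be a probability distribution with full support satisfying, for all $i \in A$, $r_i - \sum_j p_j r_j - T(\ln p_i - \sum_j p_j \ln p_j) = 0$. Then $p_i = \exp(r_i/T) / \sum_{j \in A} \exp(r_j/T)$ for all $i \in A$. -/
/-! The fixed-point equation says that `log p i - r i / T` does not depend on `i`, so `p` is
proportional to `exp (r / T)`, and normalisation identifies the factor of proportionality. -/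

open Finset

theorem eq_div_sum_of_eq_const_mul {ι K : Type*} [Fintype ι] [Field K] {p g : ι → K} {a : K}
    (h : ∀ i, p i = a * g i) (hp : ∑ i, p i = 1) (i : ι) : p i = g i / ∑ j, g j := by
  have ha : a * ∑ j, g j = 1 := by rw [mul_sum, ← hp]; exact sum_congr rfl fun j _ => (h j).symm
  rw [eq_div_iff (right_ne_zero_of_mul_eq_one ha), h i]
  linear_combination g i * ha

theorem interior_fixed_point_is_softmax_general {A : Type*} [Fintype A]
    (T : ℝ) (hT : 0 < T) (r : A → ℝ) (p : A → ℝ)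
    (hp : ∀ i, p i ∈ Set.Ioo (0:ℝ) 1) (hps : ∑ i, p i = 1)
    (hfix : ∀ i, r i - (∑ j, p j * r j)
      - T * (Real.log (p i) - ∑ j, p j * Real.log (p j)) = 0) :
    ∀ i, p i = Real.exp (r i / T) / ∑ j, Real.exp (r j / T) := by
  let c := ∑ j, p j * Real.log (p j) - (∑ j, p j * r j) / T
  have hlog : ∀ i, Real.log (p i) = c + r i / T := fun i => by
    simp only [c]
    field_simp
    linarith [hfix i]
  have hexp : ∀ i, p i = Real.exp c * Real.exp (r i / T) := fun i => by
    rw [← Real.exp_add, ← hlog, Real.exp_log (hp i).1]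
  exact eq_div_sum_of_eq_const_mul hexp hps

theorem interior_fixed_point_is_softmax {A : Type*} [Fintype A] [Nonempty A]
    (T : ℝ) (hT : 0 < T) (r : A → ℝ) (p : A → ℝ)
    (hp : ∀ i, p i ∈ Set.Ioo (0:ℝ) 1) (hps : ∑ i, p i = 1)
    (hfix : ∀ i, r i - (∑ j, p j * r j)
      - T * (Real.log (p i) - ∑ j, p j * Real.log (p j)) = 0) :
    ∀ i, p i = Real.exp (r i / T) / ∑ j, Real.exp (r j / T) :=
  interior_fixed_point_is_softmax_general T hT r p hp hps hfix
end

section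
/- Let $A$ be a finite nonempty set and let $p, x : A \to (0,1)$ be probability vectors with full support. Let $r, r^p : A \to \mathbb{R}$ and $T > 0$, and suppose $p$ satisfies $\sum_i (z_i - p_i)(r^p_i - T \ln p_i) = 0$ for all probability vectors $z$. If $x(t)$ evolves by $\dot{x}_i = x_i [ r_i - \sum_j x_j r_j - T(\ln x_i - \sum_j x_j \ln x_j)]$, then $\frac{d}{dt} D_{KL}(p \| x(t)) = \sum_i (x_i - p_i)(r_i - r^p_i) - T\left[ D_{KL}(p \| x) + D_{KL}(x \| p) \right]$. -/
/-!
Along the dynamics, `d/dt log xᵢ = gᵢ` with `gᵢ = fᵢ - ∑ⱼ xⱼ fⱼ` and `fᵢ = rᵢ - T log xᵢ`, so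
the derivative of `D(p ‖ x)` is `-∑ pᵢ gᵢ = ∑ (xᵢ - pᵢ) fᵢ`. The QRE condition at `z = x` lets us
subtract `∑ (xᵢ - pᵢ)(rᵖᵢ - T log pᵢ) = 0`, leaving `∑ (xᵢ - pᵢ)(rᵢ - rᵖᵢ) - T ∑ (xᵢ - pᵢ)(log xᵢ - log pᵢ)`,
and the last sum is the symmetrized divergence `D(p ‖ x) + D(x ‖ p)`.
-/

open Finset Real

lemma sum_mul_log_div_add_sum_mul_log_div_swap {ι : Type*} (s : Finset ι) {p x : ι → ℝ}
    (hp : ∀ i ∈ s, p i ≠ 0) (hx : ∀ i ∈ s, x i ≠ 0) :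
    ∑ i ∈ s, p i * log (p i / x i) + ∑ i ∈ s, x i * log (x i / p i)
      = ∑ i ∈ s, (x i - p i) * (log (x i) - log (p i)) := by
  rw [← sum_add_distrib]
  refine sum_congr rfl fun i hi => ?_
  rw [log_div (hp i hi) (hx i hi), log_div (hx i hi) (hp i hi)]
  ring

lemma HasDerivAt.const_mul_log_const_div {f : ℝ → ℝ} {f' t : ℝ} (c : ℝ) (hc : c ≠ 0)
    (hf : HasDerivAt f f' t) (hft : f t ≠ 0) :
    HasDerivAt (fun s => c * Real.log (c / f s)) (-(c * (f' / f t))) t := by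
  have hquot := ((hasDerivAt_const t c).div hf hft).log (div_ne_zero hc hft)
  refine (hquot.const_mul c).congr_deriv ?_
  rw [Pi.div_apply]
  field_simp
  ring

lemma HasDerivAt.sum_mul_log_div {ι : Type*} (s : Finset ι) {p : ι → ℝ} {x : ℝ → ι → ℝ}
    {x' : ι → ℝ} {t : ℝ} (hp : ∀ i ∈ s, p i ≠ 0) (hx : ∀ i ∈ s, x t i ≠ 0)
    (hderiv : ∀ i ∈ s, HasDerivAt (fun τ => x τ i) (x' i) t) :
    HasDerivAt (fun τ => ∑ i ∈ s, p i * Real.log (p i / x τ i))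
      (-∑ i ∈ s, p i * (x' i / x t i)) t := by
  rw [← sum_neg_distrib]
  exact HasDerivAt.fun_sum fun i hi =>
    (hderiv i hi).const_mul_log_const_div (p i) (hp i hi) (hx i hi)

lemma sum_mul_sub_sum_mul {ι : Type*} (s : Finset ι) {p : ι → ℝ} (hp : ∑ i ∈ s, p i = 1)
    (x f : ι → ℝ) :
    ∑ i ∈ s, p i * (f i - ∑ j ∈ s, x j * f j) = ∑ i ∈ s, (p i - x i) * f i := by
  simp only [mul_sub, sub_mul, sum_sub_distrib, ← sum_mul, hp, one_mul]

theorem KL_time_derivative_at_QRE_general {A : Type*} [Fintype A]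
    (T : ℝ) (p : A → ℝ)
    (hp : ∀ i, p i ∈ Set.Ioo (0:ℝ) 1) (hps : ∑ i, p i = 1)
    (r rp : A → ℝ)
    (horth : ∀ z : A → ℝ, (∀ i, 0 ≤ z i) → (∑ i, z i = 1) →
      ∑ i, (z i - p i) * (rp i - T * Real.log (p i)) = 0)
    (x : ℝ → A → ℝ)
    (hxmem : ∀ t i, x t i ∈ Set.Ioo (0:ℝ) 1) (hxs : ∀ t, ∑ i, x t i = 1)
    (hdiff : ∀ i, Differentiable ℝ fun t => x t i)
    (hdyn : ∀ t i, deriv (fun s => x s i) t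
      = x t i * (r i - (∑ j, x t j * r j)
          - T * (Real.log (x t i) - ∑ j, x t j * Real.log (x t j)))) :
    ∀ t, deriv (fun s => ∑ i, p i * Real.log (p i / x s i)) t
      = (∑ i, (x t i - p i) * (r i - rp i))
        - T * ((∑ i, p i * Real.log (p i / x t i))
              + ∑ i, x t i * Real.log (x t i / p i)) := by
  intro t
  have hp0 : ∀ i ∈ univ, p i ≠ 0 := fun i _ => (hp i).1.ne'
  have hx0 : ∀ i ∈ univ, x t i ≠ 0 := fun i _ => (hxmem t i).1.ne'
  set f : A → ℝ := fun i => r i - T * log (x t i)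
  have hlogderiv : ∀ i, x t i * (f i - ∑ j, x t j * f j) / x t i = f i - ∑ j, x t j * f j :=
    fun i => mul_div_cancel_left₀ _ (hx0 i (mem_univ i))
  have hderiv : ∀ i ∈ univ, HasDerivAt (fun s => x s i) (x t i * (f i - ∑ j, x t j * f j)) t := by
    intro i _
    refine ((hdiff i t).hasDerivAt.congr_deriv (hdyn t i)).congr_deriv ?_
    simp only [f, mul_sub, sum_sub_distrib, ← mul_sum, mul_left_comm _ T]
    ring
  have hqre := horth (x t) (fun i => (hxmem t i).1.le) (hxs t)
  rw [(HasDerivAt.sum_mul_log_div univ hp0 hx0 hderiv).deriv, sum_congr rfl fun i _ =>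
    congrArg (p i * ·) (hlogderiv i), sum_mul_sub_sum_mul univ hps,
    sum_mul_log_div_add_sum_mul_log_div_swap univ hp0 hx0, ← sub_zero (-_), ← hqre]
  simp only [f, mul_sum, ← sum_neg_distrib, ← sum_sub_distrib]
  exact sum_congr rfl fun i _ => by ring

theorem KL_time_derivative_at_QRE {A : Type*} [Fintype A] [Nonempty A]
    (T : ℝ) (hT : 0 < T) (p : A → ℝ)
    (hp : ∀ i, p i ∈ Set.Ioo (0:ℝ) 1) (hps : ∑ i, p i = 1)
    (r rp : A → ℝ)
    (horth : ∀ z : A → ℝ, (∀ i, 0 ≤ z i) → (∑ i, z i = 1) →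
      ∑ i, (z i - p i) * (rp i - T * Real.log (p i)) = 0)
    (x : ℝ → A → ℝ)
    (hxmem : ∀ t i, x t i ∈ Set.Ioo (0:ℝ) 1) (hxs : ∀ t, ∑ i, x t i = 1)
    (hdiff : ∀ i, Differentiable ℝ fun t => x t i)
    (hdyn : ∀ t i, deriv (fun s => x s i) t
      = x t i * (r i - (∑ j, x t j * r j)
          - T * (Real.log (x t i) - ∑ j, x t j * Real.log (x t j)))) :
    ∀ t, deriv (fun s => ∑ i, p i * Real.log (p i / x s i)) t
      = (∑ i, (x t i - p i) * (r i - rp i))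
        - T * ((∑ i, p i * Real.log (p i / x t i))
              + ∑ i, x t i * Real.log (x t i / p i)) :=
  KL_time_derivative_at_QRE_general T p hp hps r rp horth x hxmem hxs hdiff hdyn
end
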